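/- arXiv:2503.09545 — 2 statements merged into one kernel-verified Lean document; each statement's English description precedes it below -/
import Mathlib

section
/- Corollary (forward optimality preservation): if a plan π optimally solves the STRIPS planning task P, then there exists a plan π' that optimally solves the commit task P_c, and c(π') = c(π). -/
/-- A STRIPS action: positive/negative preconditions, add/delete effects, nonnegative cost. -/
structure StripsAction (α : Type*) where
  prePos : Set α
  preNeg : Set α
  add : Set α
  del : Set α
  cost : NNReal

variable {α : Type*}

/-- An action is applicable in state `s` iff `pre⁺ ⊆ s` and `pre⁻ ∩ s = ∅`. -/
def StripsAction.Applicable (a : StripsAction α) (s : Set α) : Prop :=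
  a.prePos ⊆ s ∧ a.preNeg ∩ s = ∅

/-- Result of applying an action: `γ(s,a) = (s \ del(a)) ∪ add(a)`. -/
def StripsAction.apply (a : StripsAction α) (s : Set α) : Set α :=
  (s \ a.del) ∪ a.add

/-- `Γ(s, π)`: the state resulting from applying the sequence `π` in `s`. -/
def seqResult (s : Set α) : List (StripsAction α) → Set α
  | [] => s
  | a :: π => seqResult (a.apply s) π

/-- A sequence of actions is applicable in `s` if each action is applicable in the
state resulting from the previous ones. -/
def SeqApplicable (s : Set α) : List (StripsAction α) → Prop
  | [] => True
  | a :: π => a.Applicable s ∧ SeqApplicable (a.apply s) π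

/-- Cost of a plan: sum of the costs of its actions. -/
def planCost (π : List (StripsAction α)) : NNReal :=
  (π.map StripsAction.cost).sum

/-- A STRIPS planning task `P = ⟨F, A, I, G⟩`. -/
structure StripsTask (α : Type*) where
  F : Set α
  A : Set (StripsAction α)
  I : Set α
  G : Set α

/-- Well-formedness of a STRIPS planning task: `F` and `A` finite, `I ⊆ F`, `G ⊆ F`,
all action components within `F`, and `add(a) ∩ del(a) = ∅`. -/
def StripsTask.WellFormed (T : StripsTask α) : Prop :=
  T.F.Finite ∧ T.A.Finite ∧ T.I ⊆ T.F ∧ T.G ⊆ T.F ∧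
    ∀ a ∈ T.A, a.prePos ⊆ T.F ∧ a.preNeg ⊆ T.F ∧ a.add ⊆ T.F ∧ a.del ⊆ T.F ∧
      a.add ∩ a.del = ∅

/-- A plan for a task: a sequence of actions of the task, applicable in `I`,
whose result satisfies `G`. -/
def StripsTask.IsPlan (T : StripsTask α) (π : List (StripsAction α)) : Prop :=
  (∀ a ∈ π, a ∈ T.A) ∧ SeqApplicable T.I π ∧ T.G ⊆ seqResult T.I π

/-- A task is solvable if it has a plan. -/
def StripsTask.Solvable (T : StripsTask α) : Prop := ∃ π, T.IsPlan π

/-- An optimal plan: a plan of minimal cost among all plans. -/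
def StripsTask.OptimalPlan (T : StripsTask α) (π : List (StripsAction α)) : Prop :=
  T.IsPlan π ∧ ∀ π₂, T.IsPlan π₂ → planCost π ≤ planCost π₂

/-- Pending goals: `Ḡ = {g ∈ G \ I | ∃ a ∈ A, g ∈ add(a)}`. -/
def pending (T : StripsTask α) : Set α :=
  {g | g ∈ T.G \ T.I ∧ ∃ a ∈ T.A, g ∈ a.add}

/-- The map `g ↦ g-commit` introduces fresh fluents: it is injective on the pending
goals and its values on them avoid `F`. -/
def FreshCommit (T : StripsTask α) (commit : α → α) : Prop :=
  Set.InjOn commit (pending T) ∧ ∀ g ∈ pending T, commit g ∉ T.F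

/-- Commit version of an action `a ∈ A^G` for a subset `i ⊆ add(a) ∩ Ḡ`. -/
def commitAction (commit : α → α) (a : StripsAction α) (i : Set α) : StripsAction α :=
  ⟨a.prePos, a.preNeg ∪ commit '' i, a.add ∪ commit '' i, a.del, a.cost⟩

/-- Force-commit version of an action `a ∈ A^¬G`. -/
def forceCommitAction (commit : α → α) (Gbar : Set α) (a : StripsAction α) : StripsAction α :=
  ⟨a.prePos, a.preNeg ∪ commit '' (a.del ∩ Gbar), a.add, a.del, a.cost⟩

/-- Simultaneous version of an action `a ∈ A^G*` for a subset `j ⊆ add(a) ∩ Ḡ`. -/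
def simAction (commit : α → α) (Gbar : Set α) (a : StripsAction α) (j : Set α) : StripsAction α :=
  ⟨a.prePos, a.preNeg ∪ commit '' j ∪ commit '' (a.del ∩ Gbar),
    a.add ∪ commit '' j, a.del, a.cost⟩

/-- `CompiledFrom T commit a' a` holds iff `a'` is one of the actions of the commit
task built from the original action `a ∈ A`, i.e. `ρ(a') = a`. -/
def CompiledFrom (T : StripsTask α) (commit : α → α) (a' a : StripsAction α) : Prop :=
  a ∈ T.A ∧
    ((a.add ∩ pending T ≠ ∅ ∧ a.del ∩ pending T = ∅ ∧
        ∃ i ⊆ a.add ∩ pending T, a' = commitAction commit a i) ∨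
     (a.add ∩ pending T = ∅ ∧ a.del ∩ pending T ≠ ∅ ∧
        a' = forceCommitAction commit (pending T) a) ∨
     (a.add ∩ pending T ≠ ∅ ∧ a.del ∩ pending T ≠ ∅ ∧
        ∃ j ⊆ a.add ∩ pending T, a' = simAction commit (pending T) a j) ∨
     (a.add ∩ pending T = ∅ ∧ a.del ∩ pending T = ∅ ∧ a' = a))

/-- The commit planning task `P_c = ⟨F ∪ F', A_c, I, G_c⟩`. -/
def commitTask (T : StripsTask α) (commit : α → α) : StripsTask α :=
  ⟨T.F ∪ commit '' pending T,
   {a' | ∃ a, CompiledFrom T commit a' a},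
   T.I,
   (T.G \ pending T) ∪ commit '' pending T⟩

/-!
A plan of `P` becomes a plan of `P_c` of the same cost by letting every action commit exactly
the pending goals it adds and that no later action adds or deletes: such a goal holds from that
action on, and since a goal outside `I` that holds at the end is added by the last action touching
it, every pending goal gets committed. Conversely, forgetting the commit fluents turns a plan of
`P_c` into a plan of `P` of the same cost, because a committed goal can never be deleted again.
Hence optimal costs agree, and the translation of an optimal plan of `P` is optimal for `P_c`.
-/

open Set

@[simp]
lemma planCost_cons (a : StripsAction α) (π : List (StripsAction α)) :
    planCost (a :: π) = a.cost + planCost π := by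
  simp [planCost]

namespace FreshCommit

variable {T : StripsTask α} {commit : α → α}

lemma disjoint_image (hfresh : FreshCommit T commit) {S X : Set α} (hS : S ⊆ pending T)
    (hX : X ⊆ T.F) : Disjoint (commit '' S) X := by
  rw [disjoint_left]
  rintro _ ⟨g, hg, rfl⟩ hgX
  exact hfresh.2 g (hS hg) (hX hgX)

lemma disjoint_image_image (hfresh : FreshCommit T commit) {S S' : Set α}
    (hS : S ⊆ pending T) (hS' : S' ⊆ pending T) (h : Disjoint S S') :
    Disjoint (commit '' S) (commit '' S') := by
  rw [disjoint_iff_inter_eq_empty, ← hfresh.1.image_inter hS hS',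
    disjoint_iff_inter_eq_empty.mp h, image_empty]

end FreshCommit

section Projection

variable {T : StripsTask α} {commit : α → α} {a' a : StripsAction α} {s : Set α}

structure CommitRefines (commit : α → α) (Gbar : Set α) (a' a : StripsAction α) : Prop where
  prePos_eq : a'.prePos = a.prePos
  preNeg_subset : a.preNeg ∪ commit '' (a.del ∩ Gbar) ⊆ a'.preNeg
  exists_add_eq : ∃ i ⊆ a.add ∩ Gbar, a'.add = a.add ∪ commit '' i
  del_eq : a'.del = a.del
  cost_eq : a'.cost = a.cost

lemma CompiledFrom.commitRefines (h : CompiledFrom T commit a' a) :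
    CommitRefines commit (pending T) a' a := by
  obtain ⟨-, ⟨-, hdel, i, hi, rfl⟩ | ⟨-, -, rfl⟩ | ⟨-, -, j, hj, rfl⟩ | ⟨-, hdel, rfl⟩⟩ := h
  · exact ⟨rfl, by simp [commitAction, hdel], ⟨i, hi, rfl⟩, rfl, rfl⟩
  · exact ⟨rfl, subset_rfl, ⟨∅, empty_subset _, by simp [forceCommitAction]⟩, rfl, rfl⟩
  · exact ⟨rfl, union_subset_union_left _ subset_union_left, ⟨j, hj, rfl⟩, rfl, rfl⟩
  · exact ⟨rfl, by simp [hdel], ⟨∅, empty_subset _, by simp⟩, rfl, rfl⟩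

def CommitSound (T : StripsTask α) (commit : α → α) (s : Set α) : Prop :=
  ∀ g ∈ pending T, commit g ∈ s → g ∈ s

lemma CommitRefines.applicable_inter (h : CommitRefines commit (pending T) a' a)
    (hposF : a.prePos ⊆ T.F) (happ : a'.Applicable s) : a.Applicable (s ∩ T.F) := by
  refine ⟨subset_inter (h.prePos_eq ▸ happ.1) hposF, ?_⟩
  rw [← subset_empty_iff, ← happ.2]
  exact inter_subset_inter (subset_union_left.trans h.preNeg_subset) inter_subset_left

lemma CommitRefines.apply_inter (h : CommitRefines commit (pending T) a' a)
    (hfresh : FreshCommit T commit) (haddF : a.add ⊆ T.F) :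
    a'.apply s ∩ T.F = a.apply (s ∩ T.F) := by
  obtain ⟨i, hi, hadd⟩ := h.exists_add_eq
  have hiF := hfresh.disjoint_image (hi.trans inter_subset_right) subset_rfl
  ext x
  have : x ∈ commit '' i → x ∉ T.F := fun h => disjoint_left.mp hiF h
  have := @haddF x
  simp only [StripsAction.apply, h.del_eq, hadd, mem_inter_iff, mem_union, mem_sdiff]
  tauto

/-- A committed goal survives every step: an action deleting a pending goal has its commit
fluent as a negative precondition. -/
lemma CommitRefines.commitSound_apply (h : CommitRefines commit (pending T) a' a)
    (hfresh : FreshCommit T commit) (haddF : a.add ⊆ T.F) (happ : a'.Applicable s)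
    (hs : CommitSound T commit s) : CommitSound T commit (a'.apply s) := by
  intro g hg hcg
  obtain ⟨i, hi, hadd⟩ := h.exists_add_eq
  rw [StripsAction.apply, h.del_eq, hadd] at hcg ⊢
  rcases hcg with ⟨hcs, -⟩ | hca | hci
  · refine Or.inl ⟨hs g hg hcs, fun hgd => ?_⟩
    exact eq_empty_iff_forall_notMem.mp happ.2 _
      ⟨h.preNeg_subset (Or.inr ⟨g, ⟨hgd, hg⟩, rfl⟩), hcs⟩
  · exact absurd (haddF hca) (hfresh.2 g hg)
  · exact Or.inr (Or.inl (hi ((hfresh.1.mem_image_iff (hi.trans inter_subset_right) hg).mp hci)).1)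

theorem exists_seq_of_commitTask_seq (hwf : T.WellFormed) (hfresh : FreshCommit T commit) :
    ∀ (π' : List (StripsAction α)) (s : Set α), (∀ a' ∈ π', a' ∈ (commitTask T commit).A) →
      SeqApplicable s π' → CommitSound T commit s →
      ∃ π, (∀ a ∈ π, a ∈ T.A) ∧ planCost π = planCost π' ∧ SeqApplicable (s ∩ T.F) π ∧
        seqResult s π' ∩ T.F = seqResult (s ∩ T.F) π ∧ CommitSound T commit (seqResult s π')
  | [], _, _, _, hs => ⟨[], by simp, rfl, trivial, rfl, hs⟩
  | a' :: π', s, hA, ⟨happ, happs⟩, hs => by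
    obtain ⟨a, hcomp⟩ := hA a' List.mem_cons_self
    have hr := hcomp.commitRefines
    obtain ⟨hposF, -, haddF, -, -⟩ := hwf.2.2.2.2 a hcomp.1
    obtain ⟨π, hA', hcost, happ', hres, hsound⟩ :=
      exists_seq_of_commitTask_seq hwf hfresh π' (a'.apply s)
        (fun b hb => hA b (List.mem_cons_of_mem _ hb)) happs
        (hr.commitSound_apply hfresh haddF happ hs)
    have hstep := hr.apply_inter hfresh haddF (s := s)
    refine ⟨a :: π, List.forall_mem_cons.mpr ⟨hcomp.1, hA'⟩, ?_,
      ⟨hr.applicable_inter hposF happ, hstep ▸ happ'⟩, ?_, hsound⟩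
    · simp [hcost, hr.cost_eq]
    · simp only [seqResult]
      rw [← hstep, hres]

theorem exists_isPlan_of_commitTask_isPlan (hwf : T.WellFormed) (hfresh : FreshCommit T commit)
    {π' : List (StripsAction α)} (h : (commitTask T commit).IsPlan π') :
    ∃ π, T.IsPlan π ∧ planCost π = planCost π' := by
  obtain ⟨hA, happ, hgoal⟩ := h
  have hIsound : CommitSound T commit T.I := fun g hg hcg =>
    absurd (hwf.2.2.1 hcg) (hfresh.2 g hg)
  obtain ⟨π, hA', hcost, happ', hres, hsound⟩ :=
    exists_seq_of_commitTask_seq hwf hfresh π' T.I hA happ hIsound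
  rw [inter_eq_left.mpr hwf.2.2.1] at happ' hres
  refine ⟨π, ⟨hA', happ', fun g hgG => ?_⟩, hcost⟩
  rw [← hres]
  refine ⟨?_, hwf.2.2.2.1 hgG⟩
  by_cases hg : g ∈ pending T
  · exact hsound g hg (hgoal (Or.inr (mem_image_of_mem commit hg)))
  · exact hgoal (Or.inl ⟨hgG, hg⟩)

end Projection

section Translation

variable {T : StripsTask α} {commit : α → α} {a : StripsAction α} {s D i : Set α}

def Untouched (π : List (StripsAction α)) (g : α) : Prop :=
  ∀ b ∈ π, g ∉ b.add ∧ g ∉ b.del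

lemma untouched_cons {π : List (StripsAction α)} {g : α} :
    Untouched (a :: π) g ↔ (g ∉ a.add ∧ g ∉ a.del) ∧ Untouched π g :=
  List.forall_mem_cons

def commitSet (Gbar : Set α) (a : StripsAction α) (rest : List (StripsAction α)) : Set α :=
  {g | g ∈ a.add ∩ Gbar ∧ Untouched rest g}

def committed (Gbar : Set α) : List (StripsAction α) → Set α
  | [] => ∅
  | a :: rest => commitSet Gbar a rest ∪ committed Gbar rest

/-- For an action adding no pending goal the commit set is empty, and for one deleting none the
extra negative preconditions of `simAction` vanish, so `simAction` yields the compiled action of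
every class `A^G`, `A^¬G`, `A^G*`, `A^L`. -/
def commitPlan (commit : α → α) (Gbar : Set α) : List (StripsAction α) → List (StripsAction α)
  | [] => []
  | a :: rest => simAction commit Gbar a (commitSet Gbar a rest) :: commitPlan commit Gbar rest

lemma planCost_commitPlan (commit : α → α) (Gbar : Set α) :
    ∀ π : List (StripsAction α), planCost (commitPlan commit Gbar π) = planCost π
  | [] => rfl
  | a :: rest => by
    simp only [commitPlan, planCost_cons, planCost_commitPlan commit Gbar rest]
    rfl

lemma simAction_mem_commitTask (ha : a ∈ T.A) (hi : i ⊆ a.add ∩ pending T) :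
    simAction commit (pending T) a i ∈ (commitTask T commit).A := by
  refine ⟨a, ha, ?_⟩
  by_cases hadd : a.add ∩ pending T = ∅ <;> by_cases hdel : a.del ∩ pending T = ∅
  · have hi0 : i = ∅ := subset_empty_iff.mp (hadd ▸ hi)
    exact Or.inr (Or.inr (Or.inr ⟨hadd, hdel, by simp [simAction, hi0, hdel]⟩))
  · have hi0 : i = ∅ := subset_empty_iff.mp (hadd ▸ hi)
    exact Or.inr (Or.inl ⟨hadd, hdel, by simp [simAction, forceCommitAction, hi0]⟩)
  · exact Or.inl ⟨hadd, hdel, i, hi, by simp [simAction, commitAction, hdel]⟩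
  · exact Or.inr (Or.inr (Or.inl ⟨hadd, hdel, i, hi, rfl⟩))

lemma commitPlan_mem_commitTask :
    ∀ {π : List (StripsAction α)}, (∀ a ∈ π, a ∈ T.A) →
      ∀ b ∈ commitPlan commit (pending T) π, b ∈ (commitTask T commit).A
  | [], _ => by simp [commitPlan]
  | a :: rest, hA => by
    rw [List.forall_mem_cons] at hA
    exact List.forall_mem_cons.mpr
      ⟨simAction_mem_commitTask hA.1 fun _ hg => hg.1, commitPlan_mem_commitTask hA.2⟩

lemma simAction_applicable_union (hfresh : FreshCommit T commit) (hnegF : a.preNeg ⊆ T.F)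
    (hs : s ⊆ T.F) (hD : D ⊆ pending T) (hDa : ∀ g ∈ D, g ∉ a.add ∧ g ∉ a.del)
    (hi : i ⊆ a.add ∩ pending T) (happ : a.Applicable s) :
    (simAction commit (pending T) a i).Applicable (s ∪ commit '' D) := by
  refine ⟨happ.1.trans subset_union_left, ?_⟩
  have hiG := hi.trans inter_subset_right
  rw [← disjoint_iff_inter_eq_empty]
  simp only [simAction, disjoint_union_left, disjoint_union_right]
  refine ⟨⟨⟨disjoint_iff_inter_eq_empty.mpr happ.2, hfresh.disjoint_image hiG hs⟩,
      hfresh.disjoint_image inter_subset_right hs⟩,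
    ⟨(hfresh.disjoint_image hD hnegF).symm, hfresh.disjoint_image_image hiG hD ?_⟩,
    hfresh.disjoint_image_image inter_subset_right hD ?_⟩
  · exact disjoint_left.mpr fun g hgi hgD => (hDa g hgD).1 (hi hgi).1
  · exact disjoint_left.mpr fun g hgd hgD => (hDa g hgD).2 hgd.1

lemma simAction_apply_union (hfresh : FreshCommit T commit) (hdelF : a.del ⊆ T.F)
    (hD : D ⊆ pending T) :
    (simAction commit (pending T) a i).apply (s ∪ commit '' D) = a.apply s ∪ commit '' (D ∪ i) := by
  ext x
  have : x ∈ commit '' D → x ∉ a.del := fun h => disjoint_left.mp (hfresh.disjoint_image hD hdelF) h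
  simp only [StripsAction.apply, simAction, image_union, mem_union, mem_sdiff]
  tauto

theorem commitPlan_seq (hwf : T.WellFormed) (hfresh : FreshCommit T commit) :
    ∀ (π : List (StripsAction α)) (s D : Set α), (∀ a ∈ π, a ∈ T.A) → SeqApplicable s π →
      s ⊆ T.F → D ⊆ pending T → (∀ g ∈ D, Untouched π g) →
      SeqApplicable (s ∪ commit '' D) (commitPlan commit (pending T) π) ∧
        seqResult (s ∪ commit '' D) (commitPlan commit (pending T) π) =
          seqResult s π ∪ commit '' (D ∪ committed (pending T) π)
  | [], _, _, _, _, _, _, _ => ⟨trivial, by simp [commitPlan, committed, seqResult]⟩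
  | a :: π, s, D, hA, ⟨happ, happs⟩, hs, hD, hDu => by
    rw [List.forall_mem_cons] at hA
    obtain ⟨-, hnegF, haddF, hdelF, -⟩ := hwf.2.2.2.2 a hA.1
    have hi : commitSet (pending T) a π ⊆ a.add ∩ pending T := fun _ hg => hg.1
    have hstep := simAction_apply_union hfresh hdelF hD (s := s) (i := commitSet (pending T) a π)
    obtain ⟨happ', hres⟩ := commitPlan_seq hwf hfresh π (a.apply s) (D ∪ commitSet (pending T) a π)
      hA.2 happs (union_subset (sdiff_subset.trans hs) haddF)
      (union_subset hD (hi.trans inter_subset_right))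
      (fun g hg => hg.elim (fun hgD => (untouched_cons.mp (hDu g hgD)).2) fun hgi => hgi.2)
    refine ⟨⟨simAction_applicable_union hfresh hnegF hs hD
      (fun g hg => (untouched_cons.mp (hDu g hg)).1) hi happ, hstep ▸ happ'⟩, ?_⟩
    simp only [commitPlan, seqResult, committed]
    rw [hstep, hres, union_assoc]

lemma mem_committed_or_untouched {Gbar : Set α} :
    ∀ (π : List (StripsAction α)) (s : Set α) {g : α}, g ∈ Gbar → g ∈ seqResult s π →
      g ∈ committed Gbar π ∨ (g ∈ s ∧ Untouched π g)
  | [], _, _, _, hg => Or.inr ⟨hg, by simp [Untouched]⟩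
  | a :: π, s, g, hgG, hg => by
    rcases mem_committed_or_untouched π (a.apply s) hgG hg with h | ⟨hga, hu⟩
    · exact Or.inl (Or.inr h)
    · by_cases hadd : g ∈ a.add
      · exact Or.inl (Or.inl ⟨⟨hadd, hgG⟩, hu⟩)
      · obtain ⟨hgs, hdel⟩ := hga.resolve_right hadd
        exact Or.inr ⟨hgs, untouched_cons.mpr ⟨⟨hadd, hdel⟩, hu⟩⟩

theorem isPlan_commitPlan (hwf : T.WellFormed) (hfresh : FreshCommit T commit)
    {π : List (StripsAction α)} (h : T.IsPlan π) :
    (commitTask T commit).IsPlan (commitPlan commit (pending T) π) := by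
  obtain ⟨hA, happ, hgoal⟩ := h
  obtain ⟨happ', hres⟩ := commitPlan_seq hwf hfresh π T.I ∅ hA happ hwf.2.2.1
    (empty_subset _) (by simp)
  simp only [image_empty, union_empty, empty_union] at happ' hres
  refine ⟨commitPlan_mem_commitTask hA, happ', ?_⟩
  change T.G \ pending T ∪ commit '' pending T ⊆ seqResult T.I _
  rw [hres]
  rintro x (⟨hxG, -⟩ | ⟨g, hg, rfl⟩)
  · exact Or.inl (hgoal hxG)
  · refine Or.inr (mem_image_of_mem commit ?_)
    exact (mem_committed_or_untouched π T.I hg (hgoal hg.1.1)).resolve_right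
      fun h => hg.1.2 h.1

end Translation

/-- Corollary (forward optimality preservation): if `π` optimally solves `P`, then
there exists a plan `π'` optimally solving `P_c`, with `c(π') = c(π)`. -/
theorem commit_compilation_forward_optimal {α : Type*} (T : StripsTask α) (commit : α → α)
    (hwf : T.WellFormed) (hfresh : FreshCommit T commit)
    (π : List (StripsAction α)) (hopt : T.OptimalPlan π) :
    ∃ π' : List (StripsAction α), (commitTask T commit).OptimalPlan π' ∧
      planCost π' = planCost π := by
  obtain ⟨hplan, hmin⟩ := hopt
  refine ⟨commitPlan commit (pending T) π, ⟨isPlan_commitPlan hwf hfresh hplan, fun π₂ h₂ => ?_⟩,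
    planCost_commitPlan _ _ π⟩
  obtain ⟨π₃, hplan₃, hcost₃⟩ := exists_isPlan_of_commitTask_isPlan hwf hfresh h₂
  calc planCost (commitPlan commit (pending T) π) = planCost π := planCost_commitPlan _ _ π
    _ ≤ planCost π₃ := hmin π₃ hplan₃
    _ = planCost π₂ := hcost₃
end

section
/- Lifting lemma for the commit compilation: for every original action a ∈ A and every state s ⊆ F ∪ F', if a is applicable in s ∩ F and g-commit ∉ s for every g ∈ del(a) ∩ Ḡ, then there exists a compiled action a' ∈ A_c with ρ(a') = a such that a' is applicable in s and γ(s, a') ∩ F = γ(s ∩ F, a). -/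
variable {α : Type*}

/-!
The force-commit version of `a` (no commit fluents added, the commit fluents of the pending
goals that `a` deletes forbidden) is always a compiled action of `a`: for `i = ∅` and `j = ∅` the
commit and simultaneous versions reduce to it, and if `a` deletes no pending goal it is `a`
itself. It has the effects of `a`, and its extra negative preconditions are exactly the commit
fluents assumed absent from `s`; since `pre⁻(a) ⊆ F` and `add(a) ⊆ F`, applicability and the result on `F` pass
between `s` and `s ∩ F`.
-/

namespace StripsAction

theorem Applicable.of_inter {a : StripsAction α} {s F : Set α} (hF : a.preNeg ⊆ F)
    (h : a.Applicable (s ∩ F)) : a.Applicable s :=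
  ⟨h.1.trans Set.inter_subset_left,
    Set.eq_empty_of_forall_notMem fun x ⟨hn, hs⟩ =>
      Set.eq_empty_iff_forall_notMem.mp h.2 x ⟨hn, hs, hF hn⟩⟩

theorem apply_inter_of_add_subset {a : StripsAction α} {F : Set α} (h : a.add ⊆ F)
    (s : Set α) : a.apply s ∩ F = a.apply (s ∩ F) := by
  rw [apply, apply, Set.union_inter_distrib_right, ← Set.inter_sdiff_right_comm,
    Set.inter_eq_left.mpr h]

end StripsAction

section ForceCommit

variable (commit : α → α) (Gbar : Set α) (a : StripsAction α)

@[simp]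
theorem forceCommitAction_apply (s : Set α) :
    (forceCommitAction commit Gbar a).apply s = a.apply s :=
  rfl

theorem applicable_forceCommitAction_iff {s : Set α} :
    (forceCommitAction commit Gbar a).Applicable s ↔
      a.Applicable s ∧ ∀ g ∈ a.del ∩ Gbar, commit g ∉ s := by
  simp only [StripsAction.Applicable, forceCommitAction, Set.union_inter_distrib_right,
    Set.union_empty_iff, and_assoc, ← Set.disjoint_iff_inter_eq_empty, Set.disjoint_left,
    Set.forall_mem_image]

theorem forceCommitAction_of_del_inter_eq_empty (h : a.del ∩ Gbar = ∅) :
    forceCommitAction commit Gbar a = a := by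
  simp [forceCommitAction, h]

theorem commitAction_empty : commitAction commit a ∅ = a := by
  simp [commitAction]

theorem simAction_empty : simAction commit Gbar a ∅ = forceCommitAction commit Gbar a := by
  simp [simAction, forceCommitAction]

end ForceCommit

theorem compiledFrom_forceCommitAction {T : StripsTask α} {commit : α → α}
    {a : StripsAction α} (ha : a ∈ T.A) :
    CompiledFrom T commit (forceCommitAction commit (pending T) a) a := by
  refine ⟨ha, ?_⟩
  by_cases hadd : a.add ∩ pending T = ∅ <;> by_cases hdel : a.del ∩ pending T = ∅
  · exact .inr <| .inr <| .inr ⟨hadd, hdel, forceCommitAction_of_del_inter_eq_empty _ _ _ hdel⟩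
  · exact .inr <| .inl ⟨hadd, hdel, rfl⟩
  · refine .inl ⟨hadd, hdel, ∅, Set.empty_subset _, ?_⟩
    rw [commitAction_empty, forceCommitAction_of_del_inter_eq_empty _ _ _ hdel]
  · exact .inr <| .inr <| .inl ⟨hadd, hdel, ∅, Set.empty_subset _, (simAction_empty ..).symm⟩

theorem commit_compilation_lifting_general {α : Type*} (T : StripsTask α) (commit : α → α)
    (hwf : T.WellFormed)
    (a : StripsAction α) (ha : a ∈ T.A)
    (s : Set α)
    (happ : a.Applicable (s ∩ T.F))
    (hno : ∀ g ∈ a.del ∩ pending T, commit g ∉ s) :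
    ∃ a' : StripsAction α, CompiledFrom T commit a' a ∧ a'.Applicable s ∧
      a'.apply s ∩ T.F = a.apply (s ∩ T.F) := by
  obtain ⟨-, hpreNeg, hadd, -, -⟩ := hwf.2.2.2.2 a ha
  refine ⟨forceCommitAction commit (pending T) a, compiledFrom_forceCommitAction ha, ?_, ?_⟩
  · exact (applicable_forceCommitAction_iff ..).mpr ⟨happ.of_inter hpreNeg, hno⟩
  · rw [forceCommitAction_apply, StripsAction.apply_inter_of_add_subset hadd]

/-- Lifting lemma: if `a ∈ A` is applicable in `s ∩ F` and no commit fluent of a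
pending goal deleted by `a` is in `s`, then some compiled action `a'` with
`ρ(a') = a` is applicable in `s` and `γ(s, a') ∩ F = γ(s ∩ F, a)`. -/
theorem commit_compilation_lifting {α : Type*} (T : StripsTask α) (commit : α → α)
    (hwf : T.WellFormed) (hfresh : FreshCommit T commit)
    (a : StripsAction α) (ha : a ∈ T.A)
    (s : Set α) (hs : s ⊆ (commitTask T commit).F)
    (happ : a.Applicable (s ∩ T.F))
    (hno : ∀ g ∈ a.del ∩ pending T, commit g ∉ s) :
    ∃ a' : StripsAction α, CompiledFrom T commit a' a ∧ a'.Applicable s ∧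
      a'.apply s ∩ T.F = a.apply (s ∩ T.F) :=
  commit_compilation_lifting_general T commit hwf a ha s happ hno
end
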